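/- Let q \in (1/2, 1) and let X and Y be random vectors in R^d. Suppose the floating body F_q(X) contains a Euclidean ball of radius R_min and is contained in a ball of radius R_max. If \delta_q(X,Y) \le R_min/2, then \delta_{Haus}(F_q(X), F_q(Y)) \le (3 R_max / R_min) \cdot \delta_q(X,Y). -/

import Mathlib

/-!
Both floating bodies are Wulff shapes `{x | ⟨x,θ⟩ ≤ h(θ) for all unit θ}` of quantile functions
`h_X`, `h_Y` that differ by at most `δ = δ_q(X,Y)` on the sphere. If
`B(a, R_min) ⊆ F_q(X) ⊆ B(c, R_max)` then `⟨a,θ⟩ + R_min ≤ h_X(θ)`, so the homothety of ratio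
`1 - t` centred at `a` maps `F_q(X)` into `F_q(Y)` for `t = δ / R_min`, and `F_q(Y)` into `F_q(X)`
for `t = δ / (R_min + δ)`. A point moves by `t` times its distance to `a`, which is at most
`2 R_max`, resp. `2 R_max / (1 - t)`; either way by at most `2 R_max δ / R_min`.
-/

open MeasureTheory

/-- The CDF of a (law of a) real random variable. -/
noncomputable def rcdf (μ : Measure ℝ) (t : ℝ) : ℝ := (μ (Set.Iic t)).toReal

/-- The `q`-quantile `Q_q = inf {t : P(X ≤ t) ≥ q}`. -/
noncomputable def quantile (μ : Measure ℝ) (q : ℝ) : ℝ := sInf {t | q ≤ rcdf μ t}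

/-- The `q`-quantile of the marginal `⟨X, θ⟩` of a random vector with law `μ`. -/
noncomputable def dirQuantile {d : ℕ} (μ : Measure (EuclideanSpace ℝ (Fin d))) (q : ℝ)
    (θ : EuclideanSpace ℝ (Fin d)) : ℝ :=
  quantile (μ.map fun x => (inner ℝ x θ : ℝ)) q

/-- The `q`-floating body `F_q(X) = ⋂_{θ ∈ S^{d-1}} {x : ⟨x,θ⟩ ≤ Q_q(⟨X,θ⟩)}`. -/
noncomputable def floatingBody {d : ℕ} (μ : Measure (EuclideanSpace ℝ (Fin d))) (q : ℝ) :
    Set (EuclideanSpace ℝ (Fin d)) :=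
  {x | ∀ θ : EuclideanSpace ℝ (Fin d), ‖θ‖ = 1 → (inner ℝ x θ : ℝ) ≤ dirQuantile μ q θ}

/-- The `q`-distance `δ_q(X,Y) = sup_{θ ∈ S^{d-1}} |Q_q(⟨X,θ⟩) - Q_q(⟨Y,θ⟩)|`. -/
noncomputable def deltaQ {d : ℕ} (μ ν : Measure (EuclideanSpace ℝ (Fin d))) (q : ℝ) : ℝ :=
  ⨆ θ : Metric.sphere (0 : EuclideanSpace ℝ (Fin d)) 1,
    |dirQuantile μ q θ - dirQuantile ν q θ|

open Metric Set Filter Topology AffineMap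

lemma dist_le_two_mul_of_mem_closedBall {X : Type*} [PseudoMetricSpace X] {c x y : X} {R : ℝ}
    (hx : x ∈ closedBall c R) (hy : y ∈ closedBall c R) : dist x y ≤ 2 * R := by
  linarith [dist_triangle_right x y c, mem_closedBall.1 hx, mem_closedBall.1 hy]

section WulffShape

variable {E : Type*} [NormedAddCommGroup E] [InnerProductSpace ℝ E]

def wulffShape (f : E → ℝ) : Set E :=
  {x | ∀ θ : E, ‖θ‖ = 1 → inner ℝ x θ ≤ f θ}

variable {f g : E → ℝ} {a c x : E} {r R δ : ℝ}

lemma inner_add_le_of_closedBall_subset_wulffShape (hr : 0 ≤ r)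
    (hball : closedBall a r ⊆ wulffShape f) {θ : E} (hθ : ‖θ‖ = 1) :
    inner ℝ a θ + r ≤ f θ := by
  have hmem : a + r • θ ∈ closedBall a r := by simp [norm_smul, abs_of_nonneg hr, hθ]
  have := hball hmem θ hθ
  rwa [inner_add_left, real_inner_smul_left, real_inner_self_eq_norm_sq, hθ, one_pow,
    mul_one] at this

lemma inner_lineMap_left (x a θ : E) (t : ℝ) :
    inner ℝ (lineMap x a t) θ = (1 - t) * inner ℝ x θ + t * inner ℝ a θ := by
  rw [lineMap_apply_module, inner_add_left, real_inner_smul_left, real_inner_smul_left]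

lemma lineMap_mem_wulffShape {e t : ℝ} (hr : 0 ≤ r) (hball : closedBall a r ⊆ wulffShape f)
    (hx : ∀ θ : E, ‖θ‖ = 1 → inner ℝ x θ ≤ f θ + e) (ht₀ : 0 ≤ t) (ht₁ : t ≤ 1)
    (hg : ∀ θ : E, ‖θ‖ = 1 → f θ + (1 - t) * e - t * r ≤ g θ) :
    lineMap x a t ∈ wulffShape g := by
  intro θ hθ
  have ha := inner_add_le_of_closedBall_subset_wulffShape hr hball hθ
  calc inner ℝ (lineMap x a t) θ
      = (1 - t) * inner ℝ x θ + t * inner ℝ a θ := inner_lineMap_left x a θ t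
    _ ≤ (1 - t) * (f θ + e) + t * (f θ - r) := by
      have hxθ := hx θ hθ
      gcongr
      all_goals linarith
    _ = f θ + (1 - t) * e - t * r := by ring
    _ ≤ g θ := hg θ hθ

lemma infDist_wulffShape_le_of_sub_le (hr : 0 < r) (hball : closedBall a r ⊆ wulffShape f)
    (hcont : wulffShape f ⊆ closedBall c R) (hx : x ∈ wulffShape f)
    (hfg : ∀ θ : E, ‖θ‖ = 1 → f θ - δ ≤ g θ) (hδ₀ : 0 ≤ δ) (hδr : δ ≤ r) :
    infDist x (wulffShape g) ≤ 2 * R * δ / r := by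
  set t := δ / r
  have ht₀ : 0 ≤ t := by positivity
  have htr : t * r = δ := div_mul_cancel₀ δ hr.ne'
  have hmem : lineMap x a t ∈ wulffShape g :=
    lineMap_mem_wulffShape (e := 0) hr.le hball (fun θ hθ => by simpa using hx θ hθ) ht₀
      (div_le_one_of_le₀ hδr hr.le) fun θ hθ => by linarith [hfg θ hθ]
  have hxa : dist x a ≤ 2 * R :=
    dist_le_two_mul_of_mem_closedBall (hcont hx) (hcont (hball (mem_closedBall_self hr.le)))
  calc infDist x (wulffShape g) ≤ dist x (lineMap x a t) := infDist_le_dist_of_mem hmem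
    _ = t * dist x a := by rw [dist_left_lineMap, Real.norm_of_nonneg ht₀]
    _ ≤ t * (2 * R) := by gcongr
    _ = 2 * R * δ / r := by ring

lemma infDist_wulffShape_le_of_le_add (hr : 0 < r) (hball : closedBall a r ⊆ wulffShape f)
    (hcont : wulffShape f ⊆ closedBall c R) {y : E} (hy : y ∈ wulffShape g)
    (hgf : ∀ θ : E, ‖θ‖ = 1 → g θ ≤ f θ + δ) (hδ₀ : 0 ≤ δ) :
    infDist y (wulffShape f) ≤ 2 * R * δ / r := by
  have hrδ : 0 < r + δ := by linarith
  set t := δ / (r + δ)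
  have ht₀ : 0 ≤ t := by positivity
  have ht₁ : t ≤ 1 := div_le_one_of_le₀ (by linarith) hrδ.le
  have htrδ : t * (r + δ) = δ := div_mul_cancel₀ δ hrδ.ne'
  clear_value t
  have hmem : lineMap y a t ∈ wulffShape f :=
    lineMap_mem_wulffShape hr.le hball (fun θ hθ => (hy θ hθ).trans (hgf θ hθ)) ht₀ ht₁
      fun θ hθ => by linarith
  have hya : (1 - t) * dist y a ≤ 2 * R := by
    rw [← Real.norm_of_nonneg (sub_nonneg.2 ht₁), ← dist_lineMap_right]
    exact dist_le_two_mul_of_mem_closedBall (hcont hmem)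
      (hcont (hball (mem_closedBall_self hr.le)))
  have htr : t * r = δ * (1 - t) := by linarith
  calc infDist y (wulffShape f) ≤ dist y (lineMap y a t) :=
        infDist_le_dist_of_mem hmem
    _ = t * dist y a := by rw [dist_left_lineMap, Real.norm_of_nonneg ht₀]
    _ = δ / r * ((1 - t) * dist y a) := by
      rw [← mul_assoc, div_mul_eq_mul_div, ← htr, mul_div_cancel_right₀ t hr.ne']
    _ ≤ δ / r * (2 * R) := by gcongr
    _ = 2 * R * δ / r := by ring

theorem hausdorffDist_wulffShape_le (hr : 0 < r) (hball : closedBall a r ⊆ wulffShape f)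
    (hcont : wulffShape f ⊆ closedBall c R) (hfg : ∀ θ : E, ‖θ‖ = 1 → |f θ - g θ| ≤ δ)
    (hδ₀ : 0 ≤ δ) (hδr : δ ≤ r) :
    hausdorffDist (wulffShape f) (wulffShape g) ≤ 2 * R * δ / r := by
  have hR : 0 ≤ R :=
    dist_nonneg.trans (mem_closedBall.1 (hcont (hball (mem_closedBall_self hr.le))))
  refine hausdorffDist_le_of_infDist (by positivity) (fun x hx => ?_) (fun y hy => ?_)
  · exact infDist_wulffShape_le_of_sub_le hr hball hcont hx
      (fun θ hθ => by linarith [(abs_le.1 (hfg θ hθ)).2]) hδ₀ hδr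
  · exact infDist_wulffShape_le_of_le_add hr hball hcont hy
      (fun θ hθ => by linarith [(abs_le.1 (hfg θ hθ)).1]) hδ₀

end WulffShape

lemma rcdf_eq_measureReal (ρ : Measure ℝ) (t : ℝ) : rcdf ρ t = ρ.real (Iic t) := rfl

lemma abs_quantile_le {ρ : Measure ℝ} [IsProbabilityMeasure ρ] {q r : ℝ}
    (hq : q ≤ ρ.real (Icc (-r) r)) (hq' : 1 - q < ρ.real (Icc (-r) r)) :
    |quantile ρ q| ≤ r := by
  have hr : r ∈ {t | q ≤ rcdf ρ t} := hq.trans (measureReal_mono Icc_subset_Iic_self)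
  have hlb : ∀ t ∈ {t | q ≤ rcdf ρ t}, -r ≤ t := by
    intro t ht
    by_contra! htr
    have : rcdf ρ t ≤ 1 - ρ.real (Icc (-r) r) := by
      rw [rcdf_eq_measureReal, ← probReal_compl_eq_one_sub measurableSet_Icc]
      exact measureReal_mono fun s hs hs' => by linarith [mem_Iic.1 hs, hs'.1]
    linarith [show q ≤ rcdf ρ t from ht]
  exact abs_le.2 ⟨le_csInf ⟨r, hr⟩ hlb, csInf_le ⟨-r, hlb⟩ hr⟩

lemma exists_lt_measureReal_closedBall {X : Type*} [PseudoMetricSpace X] [MeasurableSpace X]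
    (μ : Measure X) [IsProbabilityMeasure μ] (x : X) {m : ℝ} (hm : m < 1) :
    ∃ n : ℕ, m < μ.real (closedBall x n) := by
  have htend := tendsto_measure_iUnion_atTop (μ := μ)
    fun k n (hkn : k ≤ n) => closedBall_subset_closedBall (x := x) (Nat.cast_le.2 hkn)
  rw [iUnion_closedBall_nat, measure_univ] at htend
  have hreal : Tendsto (fun n : ℕ => μ.real (closedBall x n)) atTop (𝓝 1) :=
    ENNReal.toReal_one ▸ (ENNReal.tendsto_toReal ENNReal.one_ne_top).comp htend
  exact (hreal.eventually (eventually_gt_nhds hm)).exists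

lemma exists_forall_abs_dirQuantile_le {d : ℕ} (μ : Measure (EuclideanSpace ℝ (Fin d)))
    [IsProbabilityMeasure μ] {q : ℝ} (hq : q ∈ Ioo 0 1) :
    ∃ M : ℝ, ∀ θ : EuclideanSpace ℝ (Fin d), ‖θ‖ = 1 → |dirQuantile μ q θ| ≤ M := by
  obtain ⟨n, hn⟩ := exists_lt_measureReal_closedBall μ 0
    (max_lt hq.2 (by linarith [hq.1]) : max q (1 - q) < 1)
  refine ⟨n, fun θ hθ => ?_⟩
  have hmeas : Measurable fun x : EuclideanSpace ℝ (Fin d) => inner ℝ x θ := by fun_prop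
  have := Measure.isProbabilityMeasure_map (μ := μ) hmeas.aemeasurable
  have hball : μ.real (closedBall 0 n) ≤ (μ.map fun x => inner ℝ x θ).real (Icc (-n) n) := by
    rw [map_measureReal_apply hmeas measurableSet_Icc]
    refine measureReal_mono fun x hx => abs_le.1 ((abs_real_inner_le_norm x θ).trans ?_)
    simpa [hθ] using hx
  exact abs_quantile_le (by linarith [le_max_left q (1 - q)])
    (by linarith [le_max_right q (1 - q)])

lemma deltaQ_nonneg {d : ℕ} (μ ν : Measure (EuclideanSpace ℝ (Fin d))) (q : ℝ) :
    0 ≤ deltaQ μ ν q :=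
  Real.iSup_nonneg fun _ => abs_nonneg _

lemma abs_dirQuantile_sub_le_deltaQ {d : ℕ} (μ ν : Measure (EuclideanSpace ℝ (Fin d)))
    [IsProbabilityMeasure μ] [IsProbabilityMeasure ν] {q : ℝ} (hq : q ∈ Ioo 0 1)
    {θ : EuclideanSpace ℝ (Fin d)} (hθ : ‖θ‖ = 1) :
    |dirQuantile μ q θ - dirQuantile ν q θ| ≤ deltaQ μ ν q := by
  obtain ⟨M, hM⟩ := exists_forall_abs_dirQuantile_le μ hq
  obtain ⟨N, hN⟩ := exists_forall_abs_dirQuantile_le ν hq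
  refine le_ciSup (f := fun η : sphere (0 : EuclideanSpace ℝ (Fin d)) 1 =>
    |dirQuantile μ q η - dirQuantile ν q η|) ⟨M + N, ?_⟩ ⟨θ, mem_sphere_zero_iff_norm.2 hθ⟩
  rintro _ ⟨η, rfl⟩
  have hη : ‖(η : EuclideanSpace ℝ (Fin d))‖ = 1 := mem_sphere_zero_iff_norm.1 η.2
  exact (abs_sub _ _).trans (add_le_add (hM η hη) (hN η hη))

lemma floatingBody_eq_wulffShape {d : ℕ} (μ : Measure (EuclideanSpace ℝ (Fin d))) (q : ℝ) :
    floatingBody μ q = wulffShape (dirQuantile μ q) := rfl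

/-- Lemma 5 of Brunel: if `F_q(X)` contains a ball of radius `R_min` and is contained in a
ball of radius `R_max`, and `δ_q(X,Y) ≤ R_min/2`, then
`δ_Haus(F_q(X), F_q(Y)) ≤ (3 R_max / R_min) δ_q(X,Y)`. -/
theorem stmt_9 {d : ℕ} (q Rmin Rmax : ℝ) (hq : q ∈ Set.Ioo (1 / 2 : ℝ) 1)
    (hRmin : 0 < Rmin) (hRmax : 0 < Rmax)
    (μ ν : Measure (EuclideanSpace ℝ (Fin d))) [IsProbabilityMeasure μ] [IsProbabilityMeasure ν]
    (hball : ∃ a, Metric.closedBall a Rmin ⊆ floatingBody μ q)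
    (hcont : ∃ c, floatingBody μ q ⊆ Metric.closedBall c Rmax)
    (hδ : deltaQ μ ν q ≤ Rmin / 2) :
    Metric.hausdorffDist (floatingBody μ q) (floatingBody ν q) ≤
      3 * Rmax / Rmin * deltaQ μ ν q := by
  obtain ⟨a, ha⟩ := hball
  obtain ⟨c, hc⟩ := hcont
  rw [floatingBody_eq_wulffShape] at ha hc ⊢
  have hq₀₁ : q ∈ Ioo 0 1 := ⟨by linarith [hq.1], hq.2⟩
  have hδ₀ := deltaQ_nonneg μ ν q
  calc hausdorffDist (wulffShape (dirQuantile μ q)) (floatingBody ν q)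
      ≤ 2 * Rmax * deltaQ μ ν q / Rmin :=
        hausdorffDist_wulffShape_le hRmin ha hc
          (fun θ hθ => abs_dirQuantile_sub_le_deltaQ μ ν hq₀₁ hθ) hδ₀ (by linarith)
    _ ≤ 3 * Rmax / Rmin * deltaQ μ ν q := by
        rw [div_mul_eq_mul_div]
        gcongr
        norm_num
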